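/- Let a and b be positive integers and let g = gcd(a,b). Then Σ_{i=0}^{b−1} ⌊a·i/b⌋·(⌊a·i/b⌋ + 1)/2 = a(b−1)(3b − a + 2ab)/(12b) − (b − g)/4 − (a/b)·S_{a,b} + (b − g)(2b − g)/(12b). -/

import Mathlib

/-!
Write `⌊a i / b⌋ = (a i - r_i) / b` with `r_i = a i mod b`. Each summand is then a quadratic
polynomial in `i` and `r_i`, so the sum is determined by `∑ i`, `∑ i²`, `∑ i r_i = b S_{a,b}`,
`∑ r_i` and `∑ r_i²`. For the last two: with `a = g a'`, `b = g b'` and `a'` coprime to `b'`,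
`r_i = g (a' i mod b')` runs `g` times through the multiples `g k`, `k < b'`.
-/

/-- For integers `a ≥ 0`, `b ≥ 1`, `S a b = Σ_{i=0}^{b-1} (i/b)·(a·i mod b)` as a rational. -/
noncomputable def Sab (a b : ℕ) : ℚ :=
  ∑ i ∈ Finset.range b, (i : ℚ) / (b : ℚ) * ((a * i % b : ℕ) : ℚ)

open Finset

theorem Rat.intCast_floor_natCast_div_natCast (m n : ℕ) :
    (⌊(m / n : ℚ)⌋ : ℚ) = (m - (m % n : ℕ)) / n := by
  rw [Rat.floor_natCast_div_natCast]
  rcases Nat.eq_zero_or_pos n with rfl | hn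
  · simp
  rw [eq_div_iff (by positivity), eq_sub_iff_add_eq, ← Int.natCast_div, Int.cast_natCast]
  exact_mod_cast Nat.div_add_mod' m n

theorem Finset.sum_range_natCast (n : ℕ) : ∑ k ∈ range n, (k : ℚ) = n * (n - 1) / 2 := by
  induction n with
  | zero => simp
  | succ n ih => rw [sum_range_succ, ih]; push_cast; ring

theorem Finset.sum_range_natCast_sq (n : ℕ) :
    ∑ k ∈ range n, (k : ℚ) ^ 2 = n * (n - 1) * (2 * n - 1) / 6 := by
  induction n with
  | zero => simp
  | succ n ih => rw [sum_range_succ, ih]; push_cast; ring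

theorem Finset.sum_range_mul_mod {M : Type*} [AddCommMonoid M] (f : ℕ → M) (m n : ℕ) :
    ∑ i ∈ range (m * n), f (i % n) = m • ∑ k ∈ range n, f k := by
  induction m with
  | zero => simp
  | succ m ih =>
    rw [Nat.succ_mul, sum_range_add, ih, succ_nsmul]
    congr 1
    refine sum_congr rfl fun i hi => ?_
    rw [Nat.mul_add_mod_self_right, Nat.mod_eq_of_lt (mem_range.mp hi)]

theorem Nat.Coprime.sum_range_mul_mod {M : Type*} [AddCommMonoid M] {c m : ℕ}
    (hc : c.Coprime m) (f : ℕ → M) :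
    ∑ i ∈ range m, f (c * i % m) = ∑ i ∈ range m, f i := by
  rcases Nat.eq_zero_or_pos m with rfl | hm
  · simp
  have hmaps : Set.MapsTo (c * · % m) (range m) (range m) :=
    fun i _ => mem_range.mpr (Nat.mod_lt _ hm)
  have hinj : Set.InjOn (c * · % m) (range m) := by
    intro i hi j hj hij
    rw [coe_range, Set.mem_Iio] at hi hj
    simpa [Nat.ModEq, Nat.mod_eq_of_lt hi, Nat.mod_eq_of_lt hj] using
      Nat.ModEq.cancel_left_of_coprime hc.symm hij
  exact sum_nbij _ hmaps hinj (surjOn_of_injOn_of_card_le _ hmaps hinj le_rfl) fun _ _ => rfl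

theorem Finset.sum_range_mul_mod_eq_gcd_nsmul {M : Type*} [AddCommMonoid M] (f : ℕ → M)
    (a b : ℕ) :
    ∑ i ∈ range b, f (a * i % b) = a.gcd b • ∑ k ∈ range (b / a.gcd b), f (a.gcd b * k) := by
  obtain ⟨a', b', hcop, ha, hb⟩ := Nat.exists_coprime a b
  set g := a.gcd b
  clear_value g
  subst ha hb
  rcases Nat.eq_zero_or_pos g with rfl | hg
  · simp
  have hperiodic : ∀ i, a' * g * i % (b' * g) = g * (a' * (i % b') % b') := fun i => by
    rw [mul_comm a', mul_comm b', mul_assoc, Nat.mul_mod_mul_left, Nat.mul_mod_mod]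
  simp_rw [hperiodic, Nat.mul_div_cancel _ hg, mul_comm b', sum_range_mul_mod
    (fun k => f (g * (a' * k % b'))), hcop.sum_range_mul_mod (fun k => f (g * k))]

theorem Finset.sum_range_natCast_mul_mod (a b : ℕ) :
    ∑ i ∈ range b, ((a * i % b : ℕ) : ℚ) = b * (b - a.gcd b) / 2 := by
  rw [sum_range_mul_mod_eq_gcd_nsmul (fun x => (x : ℚ))]
  have hb : (b : ℚ) = a.gcd b * (b / a.gcd b : ℕ) := by
    exact_mod_cast (Nat.mul_div_cancel' (Nat.gcd_dvd_right a b)).symm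
  simp only [nsmul_eq_mul, Nat.cast_mul, ← mul_sum, sum_range_natCast]
  rw [hb]
  ring

theorem Finset.sum_range_natCast_mul_mod_sq (a b : ℕ) :
    ∑ i ∈ range b, ((a * i % b : ℕ) : ℚ) ^ 2 = b * (b - a.gcd b) * (2 * b - a.gcd b) / 6 := by
  rw [sum_range_mul_mod_eq_gcd_nsmul (fun x => (x : ℚ) ^ 2)]
  have hb : (b : ℚ) = a.gcd b * (b / a.gcd b : ℕ) := by
    exact_mod_cast (Nat.mul_div_cancel' (Nat.gcd_dvd_right a b)).symm
  simp only [nsmul_eq_mul, Nat.cast_mul, mul_pow, ← mul_sum, sum_range_natCast_sq]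
  rw [hb]
  ring

theorem stmt7_general (a b : ℕ) (hb : 0 < b) :
    (∑ i ∈ Finset.range b,
        ((⌊((a : ℚ) * (i : ℚ)) / (b : ℚ)⌋ : ℚ) * ((⌊((a : ℚ) * (i : ℚ)) / (b : ℚ)⌋ : ℚ) + 1)) / 2)
      = (a : ℚ) * ((b : ℚ) - 1) * (3 * (b : ℚ) - (a : ℚ) + 2 * (a : ℚ) * (b : ℚ)) / (12 * (b : ℚ))
        - ((b : ℚ) - (Nat.gcd a b : ℚ)) / 4
        - ((a : ℚ) / (b : ℚ)) * Sab a b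
        + ((b : ℚ) - (Nat.gcd a b : ℚ)) * (2 * (b : ℚ) - (Nat.gcd a b : ℚ)) / (12 * (b : ℚ)) := by
  have hb₀ : (b : ℚ) ≠ 0 := by positivity
  have hfloor (i : ℕ) :
      (⌊(a : ℚ) * i / b⌋ : ℚ) = (a * i - ((a * i % b : ℕ) : ℚ)) / b := by
    rw [← Nat.cast_mul, Rat.intCast_floor_natCast_div_natCast]
  have hsummand (i r : ℚ) : (a * i - r) / b * ((a * i - r) / b + 1) / 2
      = a ^ 2 / (2 * b ^ 2) * i ^ 2 - a / b ^ 2 * (i * r) + 1 / (2 * b ^ 2) * r ^ 2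
        + a / (2 * b) * i - 1 / (2 * b) * r := by
    field_simp
    ring
  have hSab : ∑ i ∈ range b, (i : ℚ) * ((a * i % b : ℕ) : ℚ) = b * Sab a b := by
    rw [Sab, mul_sum]
    exact sum_congr rfl fun i _ => by field_simp
  simp only [hfloor, hsummand, sum_add_distrib, sum_sub_distrib, ← mul_sum]
  rw [hSab, sum_range_natCast, sum_range_natCast_sq, sum_range_natCast_mul_mod,
    sum_range_natCast_mul_mod_sq]
  field_simp
  ring

/-- `Σ_{i=0}^{b−1} ⌊a·i/b⌋(⌊a·i/b⌋+1)/2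
  = a(b−1)(3b − a + 2ab)/(12b) − (b−g)/4 − (a/b)·S_{a,b} + (b−g)(2b−g)/(12b)`
with `g = gcd(a,b)`. -/
theorem stmt7 (a b : ℕ) (ha : 0 < a) (hb : 0 < b) :
    (∑ i ∈ Finset.range b,
        ((⌊((a : ℚ) * (i : ℚ)) / (b : ℚ)⌋ : ℚ) * ((⌊((a : ℚ) * (i : ℚ)) / (b : ℚ)⌋ : ℚ) + 1)) / 2)
      = (a : ℚ) * ((b : ℚ) - 1) * (3 * (b : ℚ) - (a : ℚ) + 2 * (a : ℚ) * (b : ℚ)) / (12 * (b : ℚ))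
        - ((b : ℚ) - (Nat.gcd a b : ℚ)) / 4
        - ((a : ℚ) / (b : ℚ)) * Sab a b
        + ((b : ℚ) - (Nat.gcd a b : ℚ)) * (2 * (b : ℚ) - (Nat.gcd a b : ℚ)) / (12 * (b : ℚ)) :=
  stmt7_general a b hb
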